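/- For every real number α > 0, the Lie algebra 𝔨_α on ℝ⁷ with structure equations de¹ = −α e¹⁷, de² = −2 e³⁵, de³ = −e²⁵ − e⁵⁷, de⁴ = (α/2) e⁴⁷ − e⁶⁷, de⁵ = e²³ + e³⁷, de⁶ = e⁴⁷ + (α/2) e⁶⁷, de⁷ = 0 is unimodular (i.e., tr(ad x) = 0 for every x ∈ 𝔨_α) and is not solvable. -/

import Mathlib

/-!
Common framework: unbundled exterior forms on ℝ⁷, wedge product, interior product,
Chevalley–Eilenberg differential of a Lie bracket, induced inner products on forms,
derived series, and the Lie algebras / G₂-structures from the paper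
"Laplacian flow solitons on non-solvable Lie groups" (Fino–Raffero).
-/

open scoped BigOperators

namespace G2Solitons

/-- The underlying vector space ℝ⁷. -/
abbrev V7 : Type := Fin 7 → ℝ

/-- Unbundled `k`-forms: real-valued functions of `k` vectors of ℝ⁷. -/
abbrev Form (k : ℕ) : Type := (Fin k → V7) → ℝ

/-- Standard basis of ℝ⁷. -/
def stdB (i : Fin 7) : V7 := fun j => if j = i then 1 else 0

/-- The basic `k`-form `e^{i₁} ∧ ⋯ ∧ e^{i_k}` (determinant convention, 0-indexed). -/
def eB {k : ℕ} (idx : Fin k → Fin 7) : Form k :=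
  fun v => Matrix.det (Matrix.of fun a b : Fin k => v a (idx b))

/-- Wedge product of a `p`-form and a `q`-form (convention
`(α∧β)(v) = (p!q!)⁻¹ ∑_σ sgn σ · α(v∘σ|_{first p}) β(v∘σ|_{last q})`). -/
noncomputable def wedge {p q : ℕ} (α : Form p) (β : Form q) : Form (p + q) := fun v =>
  ((p.factorial * q.factorial : ℕ) : ℝ)⁻¹ *
    ∑ σ : Equiv.Perm (Fin (p + q)),
      ((Equiv.Perm.sign σ : ℤ) : ℝ) *
        (α (fun i => v (σ (Fin.castAdd q i))) * β (fun j => v (σ (Fin.natAdd p j))))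

/-- Interior product of a vector with a `(k+1)`-form. -/
def iprod {k : ℕ} (u : V7) (α : Form (k + 1)) : Form k := fun v => α (Fin.cons u v)

/-- Chevalley–Eilenberg differential of a `(k+1)`-form with respect to a bracket:
`(dα)(x₀,…,x_{k+1}) = ∑_{i<j} (-1)^{i+j} α([xᵢ,xⱼ], x₀,…,x̂ᵢ,…,x̂ⱼ,…,x_{k+1})`. -/
def dCE {k : ℕ} (br : V7 → V7 → V7) (α : Form (k + 1)) : Form (k + 2) := fun v =>
  ∑ i : Fin (k + 2), ∑ j : Fin (k + 2),
    if (i : ℕ) < (j : ℕ) then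
      (-1 : ℝ) ^ ((i : ℕ) + (j : ℕ)) *
        α (Fin.cons (br (v i) (v j)) fun l : Fin k =>
            if (l : ℕ) < (i : ℕ) then v ⟨(l : ℕ), by omega⟩
            else if (l : ℕ) + 1 < (j : ℕ) then v ⟨(l : ℕ) + 1, by omega⟩
            else v ⟨(l : ℕ) + 2, by omega⟩)
    else 0

/-- Inner product on `k`-forms induced by the diagonal metric `g = ∑ᵢ c i (e^i)²`,
determined by declaring `{(c i₁ ⋯ c i_k)^{-1/2} e^{i₁⋯i_k} : i₁ < ⋯ < i_k}` orthonormal. -/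
noncomputable def formInner (c : Fin 7 → ℝ) {k : ℕ} (α β : Form k) : ℝ :=
  ((k.factorial : ℕ) : ℝ)⁻¹ *
    ∑ f : Fin k → Fin 7,
      (∏ i, c (f i))⁻¹ * (α (fun i => stdB (f i)) * β (fun i => stdB (f i)))

/-- Natural action of an endomorphism `D` on a `k`-form:
`(D.α)(v₁,…,v_k) = ∑ᵢ α(v₁,…,D vᵢ,…,v_k)`. -/
def actD {k : ℕ} (D : V7 → V7) (α : Form k) : Form k := fun v =>
  ∑ i : Fin k, α (Function.update v i (D (v i)))

/-- The Jacobi identity for a bilinear bracket. -/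
def Jacobi (br : V7 → V7 → V7) : Prop :=
  ∀ x y z : V7, br (br x y) z + br (br y z) x + br (br z x) y = 0

/-- Unimodularity: `tr (ad x) = 0` for all `x`. -/
def Unimodular (br : V7 → V7 → V7) : Prop :=
  ∀ x : V7, ∑ i : Fin 7, br x (stdB i) i = 0

/-- Derivation property for a map `D`. -/
def IsDeriv (br : V7 → V7 → V7) (D : V7 → V7) : Prop :=
  ∀ x y : V7, D (br x y) = br (D x) y + br x (D y)

/-- Derived series of a bracket. -/
def derSeries (br : V7 → V7 → V7) : ℕ → Submodule ℝ V7
  | 0 => ⊤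
  | n + 1 => Submodule.span ℝ
      {z | ∃ x ∈ derSeries br n, ∃ y ∈ derSeries br n, z = br x y}

/-- Solvability: the derived series terminates at zero. -/
def Solvable (br : V7 → V7 → V7) : Prop := ∃ n, derSeries br n = ⊥

/-- Real cube root (the real root, also for negative arguments). -/
noncomputable def cbrt (x : ℝ) : ℝ :=
  if x < 0 then -((-x) ^ ((1 : ℝ) / 3)) else x ^ ((1 : ℝ) / 3)

/-- The standard volume form `e^{1234567}`. -/
def vol7 : Form 7 := eB ![0, 1, 2, 3, 4, 5, 6]

end G2Solitons

namespace G2Solitons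

noncomputable section

/-- The bracket of the Lie algebra `𝔨_α` with structure equations
`(-α e¹⁷, -2 e³⁵, -e²⁵ - e⁵⁷, (α/2) e⁴⁷ - e⁶⁷, e²³ + e³⁷, e⁴⁷ + (α/2) e⁶⁷, 0)`,
via the convention `dβ(x,y) = -β([x,y])`. -/
def brK (α : ℝ) : V7 → V7 → V7 := fun x y =>
  ![α * (x 0 * y 6 - x 6 * y 0),
    2 * (x 2 * y 4 - x 4 * y 2),
    (x 1 * y 4 - x 4 * y 1) + (x 4 * y 6 - x 6 * y 4),
    -(α / 2) * (x 3 * y 6 - x 6 * y 3) + (x 5 * y 6 - x 6 * y 5),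
    -(x 1 * y 2 - x 2 * y 1) - (x 2 * y 6 - x 6 * y 2),
    -(x 3 * y 6 - x 6 * y 3) - α / 2 * (x 5 * y 6 - x 6 * y 5),
    0]

/-- `φ_α = (α/2)(e¹²⁷ + e³⁴⁷ + e⁵⁶⁷) + e¹³⁵ - e¹⁴⁶ - e²³⁶ - e²⁴⁵`. -/
def phiK (α : ℝ) : Form 3 := fun v =>
  α / 2 * (eB ![0, 1, 6] v + eB ![2, 3, 6] v + eB ![4, 5, 6] v)
    + eB ![0, 2, 4] v - eB ![0, 3, 5] v - eB ![1, 2, 5] v - eB ![1, 3, 4] v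

/-- Diagonal coefficients of the metric `g_{φ_α} = ∑_{i=1}^{6} (e^i)² + (α²/4)(e⁷)²`. -/
def cK (α : ℝ) : Fin 7 → ℝ := ![1, 1, 1, 1, 1, 1, α ^ 2 / 4]

/-- The metric `g_{φ_α}` as a bilinear form. -/
def gK (α : ℝ) (u v : V7) : ℝ := ∑ i : Fin 7, cK α i * u i * v i

/-- The volume form `dV_{φ_α} = (α/2) e¹²³⁴⁵⁶⁷`. -/
def dVK (α : ℝ) : Form 7 := fun v => α / 2 * vol7 v

/-- `τ_α = 4 e¹² - 2 e³⁴ - 2 e⁵⁶`. -/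
def tauK : Form 2 := fun v =>
  4 * eB ![0, 1] v - 2 * eB ![2, 3] v - 2 * eB ![4, 5] v

/-- `D = diag(-2, 0, 0, 4, 0, 4, 0)`. -/
def DK : V7 → V7 := fun x i => (![-2, 0, 0, 4, 0, 4, 0] : Fin 7 → ℝ) i * x i

end

end G2Solitons

/-!
`tr (ad x)` only sees the `e⁷`-component of `x`, through the diagonal entries
`-α`, `α/2`, `α/2` of `ad e₇` on `e₁`, `e₄`, `e₆`, which cancel.
The vectors `e₂, e₃, e₅` span a copy of `𝔰𝔩(2, ℝ)`: `[e₂, e₅] = e₃`, `[e₂, e₃] = -e₅`,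
`[e₃, e₅] = 2 e₂`. A subspace lying in the span of brackets of its own elements lies in every term
of the derived series, so the series never reaches `0`.
-/

namespace G2Solitons

section DerivedSeries

variable {br : V7 → V7 → V7}

theorem le_derSeries_of_le_span_bracket (S : Submodule ℝ V7)
    (hS : S ≤ Submodule.span ℝ {z | ∃ x ∈ S, ∃ y ∈ S, z = br x y}) (n : ℕ) :
    S ≤ derSeries br n := by
  induction n with
  | zero => exact le_top
  | succ n ih =>
    refine hS.trans (Submodule.span_mono ?_)
    rintro z ⟨x, hx, y, hy, rfl⟩
    exact ⟨x, ih hx, y, ih hy, rfl⟩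

theorem not_solvable_of_le_span_bracket (S : Submodule ℝ V7) (hS₀ : S ≠ ⊥)
    (hS : S ≤ Submodule.span ℝ {z | ∃ x ∈ S, ∃ y ∈ S, z = br x y}) :
    ¬ Solvable br := by
  rintro ⟨n, hn⟩
  exact hS₀ (eq_bot_iff.mpr (hn ▸ le_derSeries_of_le_span_bracket S hS n))

end DerivedSeries

theorem unimodular_brK (α : ℝ) : Unimodular (brK α) := by
  intro x
  calc ∑ i, brK α x (stdB i) i = -(α * x 6) + α / 2 * x 6 + α / 2 * x 6 := by
        simp [brK, stdB, Fin.sum_univ_seven]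
    _ = 0 := by ring

theorem brK_stdB_one_four (α : ℝ) : brK α (stdB 1) (stdB 4) = stdB 2 := by
  funext i; fin_cases i <;> simp [brK, stdB]

theorem brK_stdB_one_two (α : ℝ) : brK α (stdB 1) (stdB 2) = -stdB 4 := by
  funext i; fin_cases i <;> simp [brK, stdB]

theorem brK_stdB_two_four (α : ℝ) : brK α (stdB 2) (stdB 4) = (2 : ℝ) • stdB 1 := by
  funext i; fin_cases i <;> simp [brK, stdB]

/-- `span {e₂, e₃, e₅}` in the paper's 1-based numbering. -/
def sl2Span : Submodule ℝ V7 := Submodule.span ℝ {stdB 1, stdB 2, stdB 4}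

theorem sl2Span_ne_bot : sl2Span ≠ ⊥ := by
  intro h
  have h₁ : stdB 1 ∈ (⊥ : Submodule ℝ V7) := h ▸ Submodule.subset_span (by simp)
  have := congrFun ((Submodule.mem_bot ℝ).mp h₁) 1
  simp [stdB] at this

theorem sl2Span_le_span_brK (α : ℝ) :
    sl2Span ≤ Submodule.span ℝ {z | ∃ x ∈ sl2Span, ∃ y ∈ sl2Span, z = brK α x y} := by
  have mem : ∀ i ∈ ({1, 2, 4} : Set (Fin 7)), stdB i ∈ sl2Span := fun i hi =>
    Submodule.subset_span (by rcases hi with rfl | rfl | rfl <;> simp)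
  have bracket_mem : ∀ i ∈ ({1, 2, 4} : Set (Fin 7)), ∀ j ∈ ({1, 2, 4} : Set (Fin 7)),
      brK α (stdB i) (stdB j) ∈
        Submodule.span ℝ {z | ∃ x ∈ sl2Span, ∃ y ∈ sl2Span, z = brK α x y} :=
    fun i hi j hj => Submodule.subset_span ⟨_, mem i hi, _, mem j hj, rfl⟩
  refine Submodule.span_le.mpr ?_
  rintro v (rfl | rfl | rfl)
  · have h := Submodule.smul_mem _ (2⁻¹ : ℝ) (bracket_mem 2 (by simp) 4 (by simp))
    rwa [brK_stdB_two_four, smul_smul, inv_mul_cancel₀ two_ne_zero, one_smul] at h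
  · simpa [brK_stdB_one_four] using bracket_mem 1 (by simp) 4 (by simp)
  · simpa [brK_stdB_one_two] using
      Submodule.neg_mem _ (bracket_mem 1 (by simp) 2 (by simp))

theorem unimodular_not_solvable_brK_general (α : ℝ) :
    Unimodular (brK α) ∧ ¬ Solvable (brK α) :=
  ⟨unimodular_brK α,
    not_solvable_of_le_span_bracket sl2Span sl2Span_ne_bot (sl2Span_le_span_brK α)⟩

/-- `𝔨_α` is unimodular and not solvable. -/
theorem unimodular_not_solvable_brK (α : ℝ) (hα : 0 < α) :
    Unimodular (brK α) ∧ ¬ Solvable (brK α) :=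
  unimodular_not_solvable_brK_general α

end G2Solitons
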